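/- arXiv:2101.04346 — 5 statements merged into one kernel-verified Lean document; each statement's English description precedes it below -/
import Mathlib

section
/- Let X and Z be bounded real-valued random variables with Cov(X, Z) ≠ 0. Then the IV weight function λ(x) = Cov(𝟙{X ≥ x}, Z)/Cov(X, Z) integrates to one: ∫ λ(x) dx = 1. -/
/-!
Put `W = Z - E Z`. Since `E W = 0`, subtracting the constant `𝟙{0 ≥ x}` does not change the
covariance: `Cov(𝟙{X ≥ x}, Z) = E[(𝟙{X ≥ x} - 𝟙{0 ≥ x}) W]`. The subtracted integrand vanishes
outside a bounded strip because `X` is bounded, so Fubini applies, and the layer-cake identity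
`∫ (𝟙{a ≥ x} - 𝟙{0 ≥ x}) dx = a` turns the double integral into `E[X W] = Cov(X, Z)`.
-/

open MeasureTheory

/-- Covariance of two real-valued random variables: `Cov(A,B) = E[AB] - E[A]E[B]`. -/
noncomputable def Cov {Ω : Type*} [MeasurableSpace Ω] (μ : Measure Ω) (A B : Ω → ℝ) : ℝ :=
  (∫ ω, A ω * B ω ∂μ) - (∫ ω, A ω ∂μ) * (∫ ω, B ω ∂μ)

lemma ite_ge_sub_ite_ge_eq_indicator_sub_indicator (a x₀ x : ℝ) :
    ((if a ≥ x then (1 : ℝ) else 0) - if x₀ ≥ x then 1 else 0) =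
      (Set.Ioc x₀ a).indicator 1 x - (Set.Ioc a x₀).indicator 1 x := by
  simp only [Set.indicator_apply, Set.mem_Ioc, Pi.one_apply]
  split_ifs <;> grind

lemma integral_ite_ge_sub_ite_ge (a x₀ : ℝ) :
    ∫ x : ℝ, ((if a ≥ x then (1 : ℝ) else 0) - if x₀ ≥ x then 1 else 0) = a - x₀ := by
  have hIoc (b c : ℝ) : Integrable ((Set.Ioc b c).indicator (1 : ℝ → ℝ)) :=
    (integrable_indicator_iff measurableSet_Ioc).mpr (integrableOn_const measure_Ioc_lt_top.ne)
  simp_rw [ite_ge_sub_ite_ge_eq_indicator_sub_indicator]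
  rw [integral_sub (hIoc _ _) (hIoc _ _), integral_indicator_one measurableSet_Ioc,
    integral_indicator_one measurableSet_Ioc, Real.volume_real_Ioc, Real.volume_real_Ioc,
    ← neg_sub a x₀, max_zero_sub_max_neg_zero_eq_self]

lemma abs_ite_ge_sub_ite_ge_le_indicator_uIcc (a x₀ x : ℝ) :
    |(if a ≥ x then (1 : ℝ) else 0) - if x₀ ≥ x then 1 else 0| ≤ (Set.uIcc x₀ a).indicator 1 x := by
  classical
  rw [Set.indicator_apply]
  split_ifs <;> simp_all [Set.mem_uIcc] <;> grind

lemma integral_integral_ite_ge_sub_mul {Ω : Type*} [MeasurableSpace Ω] {μ : Measure Ω} [SFinite μ]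
    {X W : Ω → ℝ} {M : ℝ} (hX : Measurable X) (hXM : ∀ ω, |X ω| ≤ M) (hW : Integrable W μ)
    (x₀ : ℝ) :
    ∫ x : ℝ, ∫ ω, ((if X ω ≥ x then (1 : ℝ) else 0) - if x₀ ≥ x then 1 else 0) * W ω ∂μ =
      ∫ ω, (X ω - x₀) * W ω ∂μ := by
  set I := Set.Icc (min x₀ (-M)) (max x₀ M)
  have hdom : Integrable (fun p : ℝ × Ω => I.indicator 1 p.1 * ‖W p.2‖) (volume.prod μ) :=
    ((integrable_indicator_iff measurableSet_Icc).mpr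
      (integrableOn_const measure_Icc_lt_top.ne)).mul_prod hW.norm
  have hmeas : AEStronglyMeasurable
      (fun p : ℝ × Ω => ((if X p.2 ≥ p.1 then (1 : ℝ) else 0) - if x₀ ≥ p.1 then 1 else 0) * W p.2)
      (volume.prod μ) := by
    refine AEStronglyMeasurable.mul ?_ hW.aestronglyMeasurable.comp_snd
    refine (Measurable.sub ?_ ?_).aestronglyMeasurable <;>
      refine Measurable.ite (measurableSet_le ?_ ?_) measurable_const measurable_const <;>
      fun_prop
  have hle (p : ℝ × Ω) :
      ‖((if X p.2 ≥ p.1 then (1 : ℝ) else 0) - if x₀ ≥ p.1 then 1 else 0) * W p.2‖ ≤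
        I.indicator 1 p.1 * ‖W p.2‖ := by
    rw [norm_mul, Real.norm_eq_abs]
    refine mul_le_mul_of_nonneg_right ((abs_ite_ge_sub_ite_ge_le_indicator_uIcc _ _ _).trans
      (Set.indicator_le_indicator_of_subset (Set.uIcc_subset_Icc ?_ ?_) (by simp) _)) (norm_nonneg _)
    · exact ⟨min_le_left _ _, le_max_left _ _⟩
    · have := abs_le.mp (hXM p.2)
      exact ⟨min_le_of_right_le this.1, le_max_of_le_right this.2⟩
  rw [integral_integral_swap
    (f := fun x ω => ((if X ω ≥ x then (1 : ℝ) else 0) - if x₀ ≥ x then 1 else 0) * W ω)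
    (hdom.mono' hmeas (ae_of_all _ hle))]
  simp_rw [integral_mul_const, integral_ite_ge_sub_ite_ge]

lemma cov_eq_integral_sub_mul_sub_integral {Ω : Type*} [MeasurableSpace Ω] {μ : Measure Ω}
    [IsProbabilityMeasure μ] {A Z : Ω → ℝ} (hA : Integrable A μ) (hZ : Integrable Z μ)
    (hAZ : Integrable (fun ω => A ω * Z ω) μ) (d : ℝ) :
    Cov μ A Z = ∫ ω, (A ω - d) * (Z ω - ∫ ω', Z ω' ∂μ) ∂μ := by
  set c := ∫ ω, Z ω ∂μ
  have hZc : Integrable (fun ω => Z ω - c) μ := hZ.sub (integrable_const c)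
  have hcentered : ∫ ω, (Z ω - c) ∂μ = 0 := by
    rw [integral_sub hZ (integrable_const c), integral_const, probReal_univ, one_smul, sub_self]
  have hAZc : Integrable (fun ω => A ω * (Z ω - c)) μ := by
    simp_rw [mul_sub]
    exact hAZ.sub (hA.mul_const c)
  calc Cov μ A Z = ∫ ω, A ω * (Z ω - c) ∂μ := by
        simp_rw [mul_sub]
        rw [integral_sub hAZ (hA.mul_const c), integral_mul_const, Cov]
    _ = ∫ ω, A ω * (Z ω - c) ∂μ - ∫ ω, d * (Z ω - c) ∂μ := by
        rw [integral_const_mul, hcentered, mul_zero, sub_zero]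
    _ = ∫ ω, (A ω - d) * (Z ω - c) ∂μ := by
        rw [← integral_sub hAZc (hZc.const_mul d)]
        simp_rw [sub_mul]

theorem stmt_3 {Ω : Type*} [MeasurableSpace Ω] (μ : Measure Ω) [IsProbabilityMeasure μ]
    (X Z : Ω → ℝ) (hXm : Measurable X) (hZm : Measurable Z)
    (MX MZ : ℝ) (hXbdd : ∀ ω, |X ω| ≤ MX) (hZbdd : ∀ ω, |Z ω| ≤ MZ)
    (hcov : Cov μ X Z ≠ 0) :
    (∫ x : ℝ, Cov μ (fun ω => if X ω ≥ x then (1:ℝ) else 0) Z / Cov μ X Z) = 1 := by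
  have hX : Integrable X μ := .of_bound hXm.aestronglyMeasurable MX (ae_of_all _ hXbdd)
  have hZ : Integrable Z μ := .of_bound hZm.aestronglyMeasurable MZ (ae_of_all _ hZbdd)
  have hcov_layer (x : ℝ) : Cov μ (fun ω => if X ω ≥ x then (1 : ℝ) else 0) Z =
      ∫ ω, ((if X ω ≥ x then (1 : ℝ) else 0) - if (0 : ℝ) ≥ x then 1 else 0) *
        (Z ω - ∫ ω', Z ω' ∂μ) ∂μ := by
    have hmeas : Measurable fun ω => if X ω ≥ x then (1 : ℝ) else 0 :=
      Measurable.ite (measurableSet_le measurable_const hXm) measurable_const measurable_const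
    have hle (ω : Ω) : ‖if X ω ≥ x then (1 : ℝ) else 0‖ ≤ 1 := by split_ifs <;> simp
    exact cov_eq_integral_sub_mul_sub_integral
      (.of_bound hmeas.aestronglyMeasurable 1 (ae_of_all _ hle)) hZ
      (hZ.bdd_mul hmeas.aestronglyMeasurable (ae_of_all _ hle)) _
  rw [integral_div]
  simp_rw [hcov_layer]
  rw [integral_integral_ite_ge_sub_mul hXm hXbdd
      (W := fun ω => Z ω - ∫ ω', Z ω' ∂μ) (hZ.sub (integrable_const _)),
    ← cov_eq_integral_sub_mul_sub_integral hX hZ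
      (hZ.bdd_mul hXm.aestronglyMeasurable (ae_of_all _ hXbdd)), div_self hcov]
end

section
/- Let X be a bounded real-valued random variable with Var(X) > 0. Then the OLS weight function λ_OLS(x) = Cov(𝟙{X ≥ x}, X)/Var(X) is nonnegative for every x and integrates to one. -/
open MeasureTheory

/-!
Centring `X` at the threshold `x` itself, `Cov(𝟙{X ≥ x}, X) = E[(𝟙{X ≥ x} - P(X ≥ x)) (X - x)]`,
whose integrand is nonnegative pointwise: both factors are `≥ 0` when `X ≥ x` and `≤ 0` otherwise.
For the integral, write `Cov(𝟙{X ≥ x}, X) = E[𝟙{X ≥ x} (X - E X)]`; if `X` takes values in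
`[a, b]` this vanishes for `x ∉ (a, b]`, and Fubini turns `∫_a^b 𝟙{X ≥ x} dx = X - a` into
`E[(X - a)(X - E X)] = Var X`.
-/

open Set

section Covariance

variable {Ω : Type*} [MeasurableSpace Ω] {μ : Measure Ω} {A B : Ω → ℝ}

lemma cov_eq_integral_mul_sub (hA : Integrable A μ) (hAB : Integrable (fun ω => A ω * B ω) μ) :
    Cov μ A B = ∫ ω, A ω * (B ω - ∫ ω', B ω' ∂μ) ∂μ := by
  simp_rw [mul_sub]
  rw [integral_sub hAB (hA.mul_const _), integral_mul_const, Cov]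

lemma cov_eq_integral_sub_mul_sub [IsProbabilityMeasure μ] (hA : Integrable A μ)
    (hB : Integrable B μ) (hAB : Integrable (fun ω => A ω * B ω) μ) (c : ℝ) :
    Cov μ A B = ∫ ω, (A ω - ∫ ω', A ω' ∂μ) * (B ω - c) ∂μ := by
  set a := ∫ ω', A ω' ∂μ
  have h₁ : Integrable (fun ω => A ω * B ω - A ω * c) μ := hAB.sub (hA.mul_const c)
  have h₂ : Integrable (fun ω => a * B ω - a * c) μ := (hB.const_mul a).sub (integrable_const _)
  simp_rw [sub_mul, mul_sub]
  rw [integral_sub h₁ h₂, integral_sub hAB (hA.mul_const c),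
    integral_sub (hB.const_mul a) (integrable_const _), integral_mul_const, integral_const_mul,
    integral_const, Cov]
  simp only [probReal_univ, one_smul]
  ring

lemma cov_const_left [IsProbabilityMeasure μ] (c : ℝ) : Cov μ (fun _ => c) B = 0 := by
  simp [Cov, integral_const_mul]

lemma measurable_ite_le_one_zero {α : Type*} [MeasurableSpace α] {f g : α → ℝ}
    (hf : Measurable f) (hg : Measurable g) :
    Measurable (fun p => if f p ≤ g p then (1 : ℝ) else 0) :=
  Measurable.ite (measurableSet_le hf hg) measurable_const measurable_const

lemma norm_ite_one_zero_le_one (P : Prop) [Decidable P] : ‖if P then (1 : ℝ) else 0‖ ≤ 1 := by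
  split_ifs <;> simp

variable {X : Ω → ℝ}

lemma integrable_ite_ge [IsFiniteMeasure μ] (hXm : Measurable X) (x : ℝ) :
    Integrable (fun ω => if X ω ≥ x then (1 : ℝ) else 0) μ :=
  .of_bound (measurable_ite_le_one_zero measurable_const hXm).aestronglyMeasurable 1
    (ae_of_all _ fun _ => norm_ite_one_zero_le_one _)

lemma integrable_ite_ge_mul (hXm : Measurable X) (hXi : Integrable X μ) (x : ℝ) :
    Integrable (fun ω => (if X ω ≥ x then (1 : ℝ) else 0) * X ω) μ :=
  hXi.bdd_mul (measurable_ite_le_one_zero measurable_const hXm).aestronglyMeasurable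
    (ae_of_all _ fun _ => norm_ite_one_zero_le_one _)

lemma cov_ite_ge_nonneg [IsProbabilityMeasure μ] (hXm : Measurable X) (hXi : Integrable X μ)
    (x : ℝ) : 0 ≤ Cov μ (fun ω => if X ω ≥ x then 1 else 0) X := by
  have hI : Integrable (fun ω => if X ω ≥ x then (1 : ℝ) else 0) μ := integrable_ite_ge hXm x
  rw [cov_eq_integral_sub_mul_sub hI hXi (integrable_ite_ge_mul hXm hXi x) x]
  set p := ∫ ω, (if X ω ≥ x then (1 : ℝ) else 0) ∂μ
  have hp₀ : 0 ≤ p := integral_nonneg fun ω => by dsimp only; split_ifs <;> norm_num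
  have hp₁ : p ≤ 1 := by
    simpa using integral_mono hI (integrable_const 1)
      fun ω => by dsimp only; split_ifs <;> norm_num
  refine integral_nonneg fun ω => ?_
  dsimp only
  split_ifs
  · exact mul_nonneg (by linarith) (by linarith)
  · exact mul_nonneg_of_nonpos_of_nonpos (by linarith) (by linarith)

end Covariance

lemma setIntegral_Ioc_ite_ge {a b y : ℝ} (hay : a ≤ y) (hyb : y ≤ b) :
    ∫ x in Ioc a b, (if y ≥ x then (1 : ℝ) else 0) = y - a := by
  have hind : (fun x : ℝ => if y ≥ x then (1 : ℝ) else 0) = (Iic y).indicator 1 := by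
    ext x
    simp [indicator_apply]
  rw [hind, integral_indicator_one measurableSet_Iic, measureReal_restrict_apply measurableSet_Iic,
    Iic_inter_Ioc_of_le hyb, Real.volume_real_Ioc_of_le hay]

section BoundedRandomVariable

variable {Ω : Type*} [MeasurableSpace Ω] {μ : Measure Ω} [IsProbabilityMeasure μ] {X : Ω → ℝ}
  {a b : ℝ}

lemma cov_ite_ge_eq_zero_of_notMem_Ioc (hX : ∀ ω, X ω ∈ Icc a b) {x : ℝ} (hx : x ∉ Ioc a b) :
    Cov μ (fun ω => if X ω ≥ x then 1 else 0) X = 0 := by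
  rcases le_or_gt x a with hxa | hax
  · have hone : (fun ω => if X ω ≥ x then (1 : ℝ) else 0) = fun _ => 1 :=
      funext fun ω => if_pos (hxa.trans (hX ω).1)
    rw [hone, cov_const_left]
  · have hbx : b < x := not_le.1 fun hxb => hx ⟨hax, hxb⟩
    have hzero : (fun ω => if X ω ≥ x then (1 : ℝ) else 0) = fun _ => 0 :=
      funext fun ω => if_neg (not_le.2 ((hX ω).2.trans_lt hbx))
    rw [hzero, cov_const_left]

lemma integral_cov_ite_ge (hXm : Measurable X) (hX : ∀ ω, X ω ∈ Icc a b) :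
    ∫ x, Cov μ (fun ω => if X ω ≥ x then 1 else 0) X = Cov μ X X := by
  have hbdd : ∀ᵐ ω ∂μ, ‖X ω‖ ≤ max |a| |b| :=
    ae_of_all _ fun ω => abs_le_max_abs_abs (hX ω).1 (hX ω).2
  have hXi : Integrable X μ := .of_bound hXm.aestronglyMeasurable _ hbdd
  have hXX : Integrable (fun ω => X ω * X ω) μ := hXi.bdd_mul hXm.aestronglyMeasurable hbdd
  set m := ∫ ω, X ω ∂μ
  have hF : Integrable (fun p : ℝ × Ω => (if X p.2 ≥ p.1 then (1 : ℝ) else 0) * (X p.2 - m))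
      ((volume.restrict (Ioc a b)).prod μ) :=
    ((hXi.sub (integrable_const m)).comp_snd _).bdd_mul
      (measurable_ite_le_one_zero measurable_fst (hXm.comp measurable_snd)).aestronglyMeasurable
      (ae_of_all _ fun _ => norm_ite_one_zero_le_one _)
  calc ∫ x, Cov μ (fun ω => if X ω ≥ x then 1 else 0) X
      = ∫ x in Ioc a b, Cov μ (fun ω => if X ω ≥ x then 1 else 0) X :=
        (setIntegral_eq_integral_of_forall_compl_eq_zero fun _ hx =>
          cov_ite_ge_eq_zero_of_notMem_Ioc hX hx).symm
    _ = ∫ x in Ioc a b, ∫ ω, (if X ω ≥ x then (1 : ℝ) else 0) * (X ω - m) ∂μ :=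
        integral_congr_ae (ae_of_all _ fun x =>
          cov_eq_integral_mul_sub (integrable_ite_ge hXm x) (integrable_ite_ge_mul hXm hXi x))
    _ = ∫ ω, (∫ x in Ioc a b, (if X ω ≥ x then (1 : ℝ) else 0) * (X ω - m)) ∂μ :=
        integral_integral_swap hF
    _ = ∫ ω, (X ω - m) * (X ω - a) ∂μ := by
        congr 1 with ω
        rw [integral_mul_const, setIntegral_Ioc_ite_ge (hX ω).1 (hX ω).2, mul_comm]
    _ = Cov μ X X := (cov_eq_integral_sub_mul_sub hXi hXi hXX a).symm

end BoundedRandomVariable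

theorem stmt_4 {Ω : Type*} [MeasurableSpace Ω] (μ : Measure Ω) [IsProbabilityMeasure μ]
    (X : Ω → ℝ) (hXm : Measurable X)
    (MX : ℝ) (hXbdd : ∀ ω, |X ω| ≤ MX)
    (hvar : Cov μ X X > 0) :
    (∀ x : ℝ, Cov μ (fun ω => if X ω ≥ x then (1:ℝ) else 0) X / Cov μ X X ≥ 0) ∧
      (∫ x : ℝ, Cov μ (fun ω => if X ω ≥ x then (1:ℝ) else 0) X / Cov μ X X) = 1 := by
  have hXi : Integrable X μ := .of_bound hXm.aestronglyMeasurable MX (ae_of_all _ hXbdd)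
  refine ⟨fun x => div_nonneg (cov_ite_ge_nonneg hXm hXi x) hvar.le, ?_⟩
  rw [integral_div, integral_cov_ite_ge hXm fun ω => abs_le.1 (hXbdd ω), div_self hvar.ne']
end

section
/- Let Z be an integrable real-valued random variable with mean μ = E[Z], and let v ∈ ℝ. Let Z₁, Z₂ be independent copies of Z. Then E[𝟙{Z ≥ v} · (Z − μ)] = E[(Z₁ − Z₂) · 𝟙{Z₁ ≥ v > Z₂}]. -/
/-!
Push everything forward to the law `ν` of `Z`; by independence the pair `(Z₁, Z₂)` has law
`ν ⊗ ν`. On `ν ⊗ ν`, with `s = [v, ∞)`,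
`(x - y) 𝟙{x ∈ s, y ∉ s} = (x - y) 𝟙{x ∈ s} - (x - y) 𝟙{x ∈ s, y ∈ s}`.
The last term is antisymmetric under swapping `x` and `y`, so it integrates to `0`, while
integrating the first one in `y` gives `𝟙{x ∈ s} (x - E[Z])`.
-/

open MeasureTheory

theorem integral_prod_self_eq_zero_of_swap_eq_neg {α E : Type*} [MeasurableSpace α]
    [NormedAddCommGroup E] [NormedSpace ℝ E] (ρ : Measure α) [SFinite ρ] {F : α × α → E}
    (hF : ∀ z, F z.swap = -F z) : ∫ z, F z ∂ρ.prod ρ = 0 := by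
  have h := integral_prod_swap (μ := ρ) (ν := ρ) F
  simp only [hF, integral_neg] at h
  have htwice : (2 : ℝ) • ∫ z, F z ∂ρ.prod ρ = 0 := by
    rw [two_smul]
    nth_rewrite 1 [← h]
    exact neg_add_cancel _
  simpa using htwice

section

variable {α : Type*} [MeasurableSpace α] {ν : Measure α} [IsProbabilityMeasure ν] {f : α → ℝ}

theorem integrable_comp_fst_sub_comp_snd (hf : Integrable f ν) :
    Integrable (fun z : α × α ↦ f z.1 - f z.2) (ν.prod ν) :=
  (hf.comp_fst ν).sub (hf.comp_snd ν)

theorem setIntegral_prod_univ_comp_fst_sub_comp_snd (hf : Integrable f ν) {s : Set α} :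
    ∫ z in s ×ˢ Set.univ, f z.1 - f z.2 ∂ν.prod ν = ∫ x in s, f x - ∫ y, f y ∂ν ∂ν := by
  rw [← Measure.prod_restrict, Measure.restrict_univ,
    integral_prod _ ((integrable_comp_fst_sub_comp_snd hf).mono_measure
      (Measure.prod_mono Measure.restrict_le_self le_rfl))]
  refine integral_congr_ae (ae_of_all _ fun x ↦ ?_)
  dsimp only
  rw [integral_sub (integrable_const _) hf, integral_const, probReal_univ, one_smul]

theorem integral_indicator_sub_integral_eq_integral_prod (hf : Integrable f ν) {s : Set α}
    (hs : MeasurableSet s) :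
    ∫ x, s.indicator (fun x ↦ f x - ∫ y, f y ∂ν) x ∂ν =
      ∫ z, (s ×ˢ sᶜ).indicator (fun z ↦ f z.1 - f z.2) z ∂ν.prod ν := by
  have hF := integrable_comp_fst_sub_comp_snd hf
  have hsplit : (s ×ˢ sᶜ).indicator (fun z : α × α ↦ f z.1 - f z.2) =
      (s ×ˢ Set.univ).indicator (fun z ↦ f z.1 - f z.2) -
        (s ×ˢ s).indicator (fun z ↦ f z.1 - f z.2) := by
    ext z
    by_cases h₁ : z.1 ∈ s <;> by_cases h₂ : z.2 ∈ s <;> simp [h₁, h₂]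
  have hantisymm : ∫ z in s ×ˢ s, f z.1 - f z.2 ∂ν.prod ν = 0 := by
    rw [← Measure.prod_restrict]
    exact integral_prod_self_eq_zero_of_swap_eq_neg _ fun z ↦ by simp
  rw [hsplit, Pi.sub_def, integral_sub (hF.indicator (hs.prod .univ)) (hF.indicator (hs.prod hs)),
    integral_indicator (hs.prod .univ), integral_indicator (hs.prod hs), hantisymm, sub_zero,
    setIntegral_prod_univ_comp_fst_sub_comp_snd hf, integral_indicator hs]

end

theorem stmt_6_general {Ω : Type*} [MeasurableSpace Ω] (μ : Measure Ω) [IsProbabilityMeasure μ]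
    (Z Z₁ Z₂ : Ω → ℝ) (v : ℝ)
    (hZ : Integrable Z μ)
    (h1m : Measurable Z₁) (h2m : Measurable Z₂)
    (hindep : ProbabilityTheory.IndepFun Z₁ Z₂ μ)
    (hd1 : Measure.map Z₁ μ = Measure.map Z μ)
    (hd2 : Measure.map Z₂ μ = Measure.map Z μ) :
    (∫ ω, (if Z ω ≥ v then (1:ℝ) else 0) * (Z ω - ∫ ω', Z ω' ∂μ) ∂μ) =
      ∫ ω, (Z₁ ω - Z₂ ω) * (if Z₁ ω ≥ v ∧ v > Z₂ ω then (1:ℝ) else 0) ∂μ := by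
  set ν := μ.map Z
  have : IsProbabilityMeasure ν := Measure.isProbabilityMeasure_map hZ.aemeasurable
  have hid : Integrable id ν :=
    (integrable_map_measure aestronglyMeasurable_id hZ.aemeasurable).2 hZ
  have hmean : ∫ x, x ∂ν = ∫ ω, Z ω ∂μ := integral_map hZ.aemeasurable aestronglyMeasurable_id
  have hjoint : μ.map (fun ω ↦ (Z₁ ω, Z₂ ω)) = ν.prod ν := by
    rw [(ProbabilityTheory.indepFun_iff_map_prod_eq_prod_map_map h1m.aemeasurable
      h2m.aemeasurable).1 hindep, hd1, hd2]
  calc _ = ∫ x, (Set.Ici v).indicator (fun x ↦ x - ∫ y, y ∂ν) x ∂ν := by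
        rw [integral_map (f := (Set.Ici v).indicator (fun x ↦ x - ∫ y, y ∂ν)) hZ.aemeasurable
          ((measurable_id.sub_const _).indicator measurableSet_Ici).aestronglyMeasurable]
        simp [Set.indicator_apply, hmean]
    _ = ∫ z, (Set.Ici v ×ˢ (Set.Ici v)ᶜ).indicator (fun z ↦ z.1 - z.2) z ∂ν.prod ν :=
        integral_indicator_sub_integral_eq_integral_prod hid measurableSet_Ici
    _ = _ := by
        rw [← hjoint, integral_map (f := (Set.Ici v ×ˢ (Set.Ici v)ᶜ).indicator (fun z ↦ z.1 - z.2))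
          (h1m.prodMk h2m).aemeasurable
          ((measurable_fst.sub measurable_snd).indicator
            (measurableSet_Ici.prod measurableSet_Ici.compl)).aestronglyMeasurable]
        simp [Set.indicator_apply]

theorem stmt_6 {Ω : Type*} [MeasurableSpace Ω] (μ : Measure Ω) [IsProbabilityMeasure μ]
    (Z Z₁ Z₂ : Ω → ℝ) (v : ℝ)
    (hZ : Integrable Z μ) (hZm : Measurable Z)
    (h1m : Measurable Z₁) (h2m : Measurable Z₂)
    (hindep : ProbabilityTheory.IndepFun Z₁ Z₂ μ)
    (hd1 : Measure.map Z₁ μ = Measure.map Z μ)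
    (hd2 : Measure.map Z₂ μ = Measure.map Z μ) :
    (∫ ω, (if Z ω ≥ v then (1:ℝ) else 0) * (Z ω - ∫ ω', Z ω' ∂μ) ∂μ) =
      ∫ ω, (Z₁ ω - Z₂ ω) * (if Z₁ ω ≥ v ∧ v > Z₂ ω then (1:ℝ) else 0) ∂μ :=
  stmt_6_general μ Z Z₁ Z₂ v hZ h1m h2m hindep hd1 hd2
end

section
/- Let Y, X, Z, W be random variables where W is a random vector in ℝᵏ with E[WWᵀ] invertible. Define L(R|W) = Wᵀ E[WWᵀ]⁻¹ E[WR] (linear projection) and define β* = E[(Y − E[Y|W])(Z − E[Z|W])] / E[(X − E[X|W])(Z − E[Z|W])], assuming the denominator is nonzero. Then E[(Y − L(Y|W))(Z − L(Z|W))] = β* · E[(X − L(X|W))(Z − L(Z|W))] + E[(E[Y − β*X | W] − L(Y − β*X | W))(E[Z|W] − L(Z|W))]. -/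
/-! Put `A := Y - β* X`. Linearity of `L(·|W)` turns the left side minus
`β* E[(X - L(X|W))(Z - L(Z|W))]` into `E[(A - L(A|W))(Z - L(Z|W))]`, and linearity of `E[·|W]`
together with the choice of `β*` gives `E[(A - E[A|W])(Z - E[Z|W])] = 0`. Since `L(·|W)` is
`σ(W)`-measurable, residuals `R - E[R|W]` are orthogonal to the differences `E[·|W] - L(·|W)`,
which splits `E[(A - L(A|W))(Z - L(Z|W))]` into those two pieces. -/

open MeasureTheory

/-- Population linear projection of `R` onto the random vector `W`:
`L(R|W) = Wᵀ E[WWᵀ]⁻¹ E[WR]`. -/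
noncomputable def Lproj {Ω : Type*} [MeasurableSpace Ω] (μ : Measure Ω) (k : ℕ)
    (W : Ω → Fin k → ℝ) (R : Ω → ℝ) (ω : Ω) : ℝ :=
  ∑ i, (((Matrix.of fun i j => ∫ ω', W ω' i * W ω' j ∂μ : Matrix (Fin k) (Fin k) ℝ))⁻¹.mulVec
      (fun i => ∫ ω', W ω' i * R ω' ∂μ)) i * W ω i

/-- Conditional expectation of `R` given the σ-algebra generated by the random vector `W`. -/
noncomputable def condExpW {Ω : Type*} [inst : MeasurableSpace Ω] (μ : Measure Ω) (k : ℕ)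
    (W : Ω → Fin k → ℝ) (R : Ω → ℝ) : Ω → ℝ :=
  MeasureTheory.condExp (MeasurableSpace.comap W inferInstance) (m₀ := inst) μ R

section Residuals

variable {Ω : Type*} {m m₀ : MeasurableSpace Ω} {μ : Measure Ω}

theorem integral_sub_const_mul_sub_mul_of_ae_eq {f g h p q r : Ω → ℝ} (c : ℝ)
    (hf : MemLp f 2 μ) (hg : MemLp g 2 μ) (hh : MemLp h 2 μ) (hp : MemLp p 2 μ)
    (hq : MemLp q 2 μ) (hr : r =ᵐ[μ] fun ω => p ω - c * q ω) :
    ∫ ω, (f ω - c * g ω - r ω) * h ω ∂μ =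
      ∫ ω, (f ω - p ω) * h ω ∂μ - c * ∫ ω, (g ω - q ω) * h ω ∂μ := by
  have hfp : Integrable (fun ω => (f ω - p ω) * h ω) μ := (hf.sub hp).integrable_mul hh
  have hgq : Integrable (fun ω => (g ω - q ω) * h ω) μ := (hg.sub hq).integrable_mul hh
  rw [← integral_const_mul, ← integral_sub hfp (hgq.const_mul c)]
  refine integral_congr_ae ?_
  filter_upwards [hr] with ω hω
  rw [hω]
  ring

theorem condExp_sub_const_mul_ae {f g : Ω → ℝ} (c : ℝ) (hf : Integrable f μ)
    (hg : Integrable g μ) :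
    μ[fun ω => f ω - c * g ω|m] =ᵐ[μ] fun ω => μ[f|m] ω - c * μ[g|m] ω := by
  show μ[f - c • g|m] =ᵐ[μ] _
  filter_upwards [condExp_sub hf (hg.smul c) m, condExp_smul c g m] with ω hsub hsmul
  rw [hsub, Pi.sub_apply, hsmul]
  rfl

variable [IsFiniteMeasure μ]

theorem integral_sub_condExp_mul_eq_zero (hm : m ≤ m₀) {f g : Ω → ℝ} (hf : MemLp f 2 μ)
    (hg : MemLp g 2 μ) (hgm : StronglyMeasurable[m] g) :
    ∫ ω, (f ω - μ[f|m] ω) * g ω ∂μ = 0 := by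
  have hfg : Integrable (fun ω => f ω * g ω) μ := hf.integrable_mul hg
  have hEfg : Integrable (fun ω => μ[f|m] ω * g ω) μ := (hf.condExp one_le_two).integrable_mul hg
  have pull_out : ∫ ω, g ω * f ω ∂μ = ∫ ω, g ω * μ[f|m] ω ∂μ := by
    rw [← integral_condExp hm]
    exact integral_congr_ae <| condExp_mul_of_stronglyMeasurable_left hgm
      (hg.integrable_mul hf) (hf.integrable one_le_two)
  simp_rw [sub_mul]
  rw [integral_sub hfg hEfg]
  simp_rw [mul_comm _ (g _)]
  rw [pull_out, sub_self]

theorem integral_sub_mul_sub_eq_condExp_add (hm : m ≤ m₀) {f g a b : Ω → ℝ}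
    (hf : MemLp f 2 μ) (hg : MemLp g 2 μ) (ha : MemLp a 2 μ) (hb : MemLp b 2 μ)
    (ham : StronglyMeasurable[m] a) (hbm : StronglyMeasurable[m] b) :
    ∫ ω, (f ω - a ω) * (g ω - b ω) ∂μ =
      ∫ ω, (f ω - μ[f|m] ω) * (g ω - μ[g|m] ω) ∂μ +
        ∫ ω, (μ[f|m] ω - a ω) * (μ[g|m] ω - b ω) ∂μ := by
  have hr := hf.sub (hf.condExp (m := m) one_le_two)
  have hs := hg.sub (hg.condExp (m := m) one_le_two)
  have hu := (hf.condExp (m := m) one_le_two).sub ha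
  have hv := (hg.condExp (m := m) one_le_two).sub hb
  have hrv := integral_sub_condExp_mul_eq_zero hm hf (g := fun ω => μ[g|m] ω - b ω) hv
    (stronglyMeasurable_condExp.sub hbm)
  have hsu := integral_sub_condExp_mul_eq_zero hm hg (g := fun ω => μ[f|m] ω - a ω) hu
    (stronglyMeasurable_condExp.sub ham)
  have irs : Integrable (fun ω => (f ω - μ[f|m] ω) * (g ω - μ[g|m] ω)) μ := hr.integrable_mul hs
  have irv : Integrable (fun ω => (f ω - μ[f|m] ω) * (μ[g|m] ω - b ω)) μ := hr.integrable_mul hv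
  have isu : Integrable (fun ω => (g ω - μ[g|m] ω) * (μ[f|m] ω - a ω)) μ := hs.integrable_mul hu
  have iuv : Integrable (fun ω => (μ[f|m] ω - a ω) * (μ[g|m] ω - b ω)) μ := hu.integrable_mul hv
  have expand : (fun ω => (f ω - a ω) * (g ω - b ω)) = fun ω =>
      (f ω - μ[f|m] ω) * (g ω - μ[g|m] ω) + (f ω - μ[f|m] ω) * (μ[g|m] ω - b ω) +
        (g ω - μ[g|m] ω) * (μ[f|m] ω - a ω) + (μ[f|m] ω - a ω) * (μ[g|m] ω - b ω) := by
    funext ω; ring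
  rw [expand, integral_add ?_ iuv, integral_add ?_ isu, integral_add irs irv, hrv, hsu, add_zero,
    add_zero]
  exacts [irs.add irv, (irs.add irv).add isu]

end Residuals

section LinearProjection

variable {Ω : Type*} [MeasurableSpace Ω] (μ : Measure Ω) {k : ℕ} (W : Ω → Fin k → ℝ)

theorem memLp_Lproj (hWi : ∀ i, MemLp (fun ω => W ω i) 2 μ) (R : Ω → ℝ) :
    MemLp (Lproj μ k W R) 2 μ :=
  memLp_finsetSum _ fun i _ => (hWi i).const_mul _

theorem stronglyMeasurable_comap_Lproj (R : Ω → ℝ) :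
    StronglyMeasurable[MeasurableSpace.comap W inferInstance] (Lproj μ k W R) :=
  (Finset.measurable_sum _ fun i _ =>
    measurable_const.mul ((measurable_pi_apply i).comp (comap_measurable W))).stronglyMeasurable

theorem Lproj_sub_const_mul (hWi : ∀ i, MemLp (fun ω => W ω i) 2 μ) {Y X : Ω → ℝ}
    (hY : MemLp Y 2 μ) (hX : MemLp X 2 μ) (c : ℝ) :
    Lproj μ k W (fun ω => Y ω - c * X ω) = fun ω => Lproj μ k W Y ω - c * Lproj μ k W X ω := by
  have moments : (fun i => ∫ ω, W ω i * (Y ω - c * X ω) ∂μ) =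
      (fun i => ∫ ω, W ω i * Y ω ∂μ) - c • fun i => ∫ ω, W ω i * X ω ∂μ := by
    funext i
    have hWY : Integrable (fun ω => W ω i * Y ω) μ := (hWi i).integrable_mul hY
    have hWX : Integrable (fun ω => W ω i * X ω) μ := (hWi i).integrable_mul hX
    simp_rw [mul_sub, mul_left_comm _ c]
    rw [integral_sub hWY (hWX.const_mul c), integral_const_mul]
    rfl
  funext ω
  simp only [Lproj, moments, Matrix.mulVec_sub, Matrix.mulVec_smul, Finset.mul_sum,
    ← Finset.sum_sub_distrib, Pi.sub_apply, Pi.smul_apply, smul_eq_mul, sub_mul, mul_assoc]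

end LinearProjection

theorem stmt_8_general {Ω : Type*} [MeasurableSpace Ω] (μ : Measure Ω) [IsProbabilityMeasure μ]
    {k : ℕ} (W : Ω → Fin k → ℝ) (Y X Z : Ω → ℝ)
    (hW : Measurable W)
    (hY : MeasureTheory.MemLp Y 2 μ) (hX : MeasureTheory.MemLp X 2 μ)
    (hZ : MeasureTheory.MemLp Z 2 μ)
    (hWi : ∀ i, MeasureTheory.MemLp (fun ω => W ω i) 2 μ)
    (hden : (∫ ω, (X ω - condExpW μ k W X ω) * (Z ω - condExpW μ k W Z ω) ∂μ) ≠ 0)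
    (βs : ℝ)
    (hβ : βs = (∫ ω, (Y ω - condExpW μ k W Y ω) * (Z ω - condExpW μ k W Z ω) ∂μ) /
        (∫ ω, (X ω - condExpW μ k W X ω) * (Z ω - condExpW μ k W Z ω) ∂μ)) :
    (∫ ω, (Y ω - Lproj μ k W Y ω) * (Z ω - Lproj μ k W Z ω) ∂μ) =
      βs * (∫ ω, (X ω - Lproj μ k W X ω) * (Z ω - Lproj μ k W Z ω) ∂μ) +
        ∫ ω, (condExpW μ k W (fun ω' => Y ω' - βs * X ω') ω -
            Lproj μ k W (fun ω' => Y ω' - βs * X ω') ω) *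
          (condExpW μ k W Z ω - Lproj μ k W Z ω) ∂μ := by
  have hm := hW.comap_le
  have hL := memLp_Lproj μ W hWi
  have hZ_res : MemLp (fun ω => Z ω - condExpW μ k W Z ω) 2 μ := hZ.sub (hZ.condExp one_le_two)
  have hβ_den : βs * ∫ ω, (X ω - condExpW μ k W X ω) * (Z ω - condExpW μ k W Z ω) ∂μ =
      ∫ ω, (Y ω - condExpW μ k W Y ω) * (Z ω - condExpW μ k W Z ω) ∂μ := by
    rw [hβ, div_mul_cancel₀ _ hden]
  have hE_lin := integral_sub_const_mul_sub_mul_of_ae_eq βs hY hX hZ_res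
    (hY.condExp one_le_two) (hX.condExp one_le_two)
    (condExp_sub_const_mul_ae (m := MeasurableSpace.comap W inferInstance) βs
      (hY.integrable one_le_two) (hX.integrable one_le_two))
  have hL_lin := integral_sub_const_mul_sub_mul_of_ae_eq βs hY hX
    (h := fun ω => Z ω - Lproj μ k W Z ω) (hZ.sub (hL Z)) (hL Y) (hL X)
    (.of_eq (Lproj_sub_const_mul μ W hWi hY hX βs))
  have tower := integral_sub_mul_sub_eq_condExp_add hm (f := fun ω => Y ω - βs * X ω)
    (hY.sub (hX.const_mul βs)) hZ (hL _) (hL Z)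
    (stronglyMeasurable_comap_Lproj μ W fun ω => Y ω - βs * X ω)
    (stronglyMeasurable_comap_Lproj μ W Z)
  unfold condExpW at *
  linarith

theorem stmt_8 {Ω : Type*} [MeasurableSpace Ω] (μ : Measure Ω) [IsProbabilityMeasure μ]
    {k : ℕ} (W : Ω → Fin k → ℝ) (Y X Z : Ω → ℝ)
    (hW : Measurable W)
    (hY : MeasureTheory.MemLp Y 2 μ) (hX : MeasureTheory.MemLp X 2 μ)
    (hZ : MeasureTheory.MemLp Z 2 μ)
    (hWi : ∀ i, MeasureTheory.MemLp (fun ω => W ω i) 2 μ)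
    (hinv : IsUnit ((Matrix.of fun i j => ∫ ω, W ω i * W ω j ∂μ : Matrix (Fin k) (Fin k) ℝ)))
    (hden : (∫ ω, (X ω - condExpW μ k W X ω) * (Z ω - condExpW μ k W Z ω) ∂μ) ≠ 0)
    (βs : ℝ)
    (hβ : βs = (∫ ω, (Y ω - condExpW μ k W Y ω) * (Z ω - condExpW μ k W Z ω) ∂μ) /
        (∫ ω, (X ω - condExpW μ k W X ω) * (Z ω - condExpW μ k W Z ω) ∂μ)) :
    (∫ ω, (Y ω - Lproj μ k W Y ω) * (Z ω - Lproj μ k W Z ω) ∂μ) =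
      βs * (∫ ω, (X ω - Lproj μ k W X ω) * (Z ω - Lproj μ k W Z ω) ∂μ) +
        ∫ ω, (condExpW μ k W (fun ω' => Y ω' - βs * X ω') ω -
            Lproj μ k W (fun ω' => Y ω' - βs * X ω') ω) *
          (condExpW μ k W Z ω - Lproj μ k W Z ω) ∂μ :=
  stmt_8_general μ W Y X Z hW hY hX hZ hWi hden βs hβ
end

section
/- Let X be a bounded random variable, Z a random variable with Cov(X,Z) ≠ 0, and g : ℝ → ℝ continuously differentiable. Suppose additionally that for every x, Cov(𝟙{X ≥ x}, Z) ≥ 0 and that g' ≥ c for a constant c ∈ ℝ. Then Cov(g(X), Z)/Cov(X, Z) ≥ c whenever Cov(X,Z) > 0. -/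
open MeasureTheory

/-!
With `h t = g t - c t`, the claim is `Cov(h(X), Z) ≥ 0`. Since `X ∈ [a, b]`, the fundamental theorem
of calculus gives `h(X) - h(a) = ∫_{(a, b]} h'(x) 𝟙{X ≥ x} dx`, and Fubini turns this into
`Cov(h(X), Z) = ∫_{(a, b]} h'(x) Cov(𝟙{X ≥ x}, Z) dx`, an integral of products of nonnegative
factors.
-/

open Set

lemma Continuous.exists_bound_comp_of_mem_Icc {Ω : Type*} {X : Ω → ℝ} {a b : ℝ} {f : ℝ → ℝ}
    (hf : Continuous f) (hXab : ∀ ω, X ω ∈ Icc a b) : ∃ C, ∀ ω, ‖f (X ω)‖ ≤ C := by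
  obtain ⟨C, hC⟩ := isCompact_Icc.exists_bound_of_continuousOn hf.continuousOn
  exact ⟨C, fun ω => hC _ (hXab ω)⟩

section Integrability

variable {Ω : Type*} [MeasurableSpace Ω] {μ : Measure Ω} {X Z : Ω → ℝ} {a b : ℝ}

lemma Continuous.integrable_comp_of_mem_Icc [IsFiniteMeasure μ] {f : ℝ → ℝ} (hf : Continuous f)
    (hX : Measurable X) (hXab : ∀ ω, X ω ∈ Icc a b) : Integrable (fun ω => f (X ω)) μ := by
  obtain ⟨C, hC⟩ := hf.exists_bound_comp_of_mem_Icc hXab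
  exact .of_bound (hf.measurable.comp hX).aestronglyMeasurable C (.of_forall hC)

lemma Continuous.integrable_comp_mul_of_mem_Icc {f : ℝ → ℝ} (hf : Continuous f)
    (hX : Measurable X) (hXab : ∀ ω, X ω ∈ Icc a b) (hZ : Integrable Z μ) :
    Integrable (fun ω => f (X ω) * Z ω) μ := by
  obtain ⟨C, hC⟩ := hf.exists_bound_comp_of_mem_Icc hXab
  exact hZ.bdd_mul (hf.measurable.comp hX).aestronglyMeasurable (.of_forall hC)

end Integrability

section Covariance

variable {Ω : Type*} [MeasurableSpace Ω] {μ : Measure Ω} {A B Z : Ω → ℝ}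

lemma cov_eq_integral_mul_sub_integral (hA : Integrable A μ)
    (hAZ : Integrable (fun ω => A ω * Z ω) μ) :
    Cov μ A Z = ∫ ω, A ω * (Z ω - ∫ ω', Z ω' ∂μ) ∂μ := by
  simp only [mul_sub]
  rw [integral_sub hAZ (hA.mul_const _), integral_mul_const, Cov]

lemma cov_sub (hA : Integrable A μ) (hAZ : Integrable (fun ω => A ω * Z ω) μ)
    (hB : Integrable B μ) (hBZ : Integrable (fun ω => B ω * Z ω) μ) :
    Cov μ (fun ω => A ω - B ω) Z = Cov μ A Z - Cov μ B Z := by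
  simp only [Cov, sub_mul]
  rw [integral_sub hAZ hBZ, integral_sub hA hB]
  ring

lemma cov_const_mul (c : ℝ) : Cov μ (fun ω => c * A ω) Z = c * Cov μ A Z := by
  simp only [Cov, mul_assoc, integral_const_mul]
  ring

end Covariance

lemma sub_eq_integral_Ioc_ite_deriv {h : ℝ → ℝ} (hh : ContDiff ℝ 1 h) {a b y : ℝ}
    (hy : y ∈ Icc a b) : h y - h a = ∫ x in Ioc a b, if x ≤ y then deriv h x else 0 := by
  have hftc : ∫ x in a..y, deriv h x = h y - h a :=
    intervalIntegral.integral_eq_sub_of_hasDerivAt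
      (fun x _ => ((hh.differentiable one_ne_zero) x).hasDerivAt)
      ((hh.continuous_deriv le_rfl).intervalIntegrable _ _)
  rw [← hftc, ← intervalIntegral.integral_indicator hy,
    intervalIntegral.integral_of_le (hy.1.trans hy.2)]
  rfl

section WeightedAverage

variable {Ω : Type*} [MeasurableSpace Ω] {μ : Measure Ω} [IsProbabilityMeasure μ] {X Z : Ω → ℝ}
  {a b : ℝ}

theorem cov_comp_eq_integral_deriv_mul_cov {h : ℝ → ℝ} (hh : ContDiff ℝ 1 h) (hX : Measurable X)
    (hXab : ∀ ω, X ω ∈ Icc a b) (hZ : Integrable Z μ) :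
    Cov μ (fun ω => h (X ω)) Z =
      ∫ x in Ioc a b, deriv h x * Cov μ (fun ω => if X ω ≥ x then (1 : ℝ) else 0) Z := by
  set Z' : Ω → ℝ := fun ω => Z ω - ∫ ω', Z ω' ∂μ
  have hZ' : Integrable Z' μ := hZ.sub (integrable_const _)
  have hZ'_mean : ∫ ω, Z' ω ∂μ = 0 := by simp [Z', integral_sub hZ (integrable_const _)]
  have hh'_cont : Continuous (deriv h) := hh.continuous_deriv le_rfl
  have hindicator_cov (x : ℝ) : Cov μ (fun ω => if X ω ≥ x then (1 : ℝ) else 0) Z =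
      ∫ ω, (if x ≤ X ω then Z' ω else 0) ∂μ := by
    have hmeas : Measurable fun ω => if X ω ≥ x then (1 : ℝ) else 0 :=
      Measurable.ite (measurableSet_le measurable_const hX) measurable_const measurable_const
    have hbound : ∀ ω, ‖if X ω ≥ x then (1 : ℝ) else 0‖ ≤ 1 := fun ω => by split_ifs <;> simp
    rw [cov_eq_integral_mul_sub_integral
      (.of_bound hmeas.aestronglyMeasurable 1 (.of_forall hbound))
      (hZ.bdd_mul hmeas.aestronglyMeasurable (.of_forall hbound))]
    congr with ω
    split_ifs <;> simp_all [Z']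
  set F : Ω → ℝ → ℝ := fun ω x => if x ≤ X ω then Z' ω * deriv h x else 0
  have hF : Integrable (Function.uncurry F) (μ.prod (volume.restrict (Ioc a b))) :=
    (hZ'.mul_prod (hh'_cont.integrableOn_Icc.mono_set Ioc_subset_Icc_self)).indicator
      (measurableSet_le measurable_snd (hX.comp measurable_fst))
  calc Cov μ (fun ω => h (X ω)) Z
      = ∫ ω, (h (X ω) - h a) * Z' ω ∂μ := by
        simp only [sub_mul]
        rw [integral_sub (hh.continuous.integrable_comp_mul_of_mem_Icc hX hXab hZ')
          (hZ'.const_mul _), integral_const_mul, hZ'_mean, mul_zero, sub_zero]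
        exact cov_eq_integral_mul_sub_integral (hh.continuous.integrable_comp_of_mem_Icc hX hXab)
          (hh.continuous.integrable_comp_mul_of_mem_Icc hX hXab hZ)
    _ = ∫ ω, (∫ x in Ioc a b, F ω x) ∂μ := by
        congr with ω
        rw [sub_eq_integral_Ioc_ite_deriv hh (hXab ω), ← integral_mul_const]
        congr with x
        by_cases hx : x ≤ X ω <;> simp [F, hx, mul_comm]
    _ = ∫ x in Ioc a b, ∫ ω, F ω x ∂μ := integral_integral_swap hF
    _ = _ := by
        congr with x
        rw [hindicator_cov, ← integral_const_mul]
        congr with ω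
        by_cases hx : x ≤ X ω <;> simp [F, hx, mul_comm]

theorem cov_comp_nonneg {h : ℝ → ℝ} (hh : ContDiff ℝ 1 h) (hh' : ∀ x, 0 ≤ deriv h x)
    (hX : Measurable X) (hXab : ∀ ω, X ω ∈ Icc a b) (hZ : Integrable Z μ)
    (hwts : ∀ x, 0 ≤ Cov μ (fun ω => if X ω ≥ x then (1 : ℝ) else 0) Z) :
    0 ≤ Cov μ (fun ω => h (X ω)) Z := by
  rw [cov_comp_eq_integral_deriv_mul_cov hh hX hXab hZ]
  exact setIntegral_nonneg measurableSet_Ioc fun x _ => mul_nonneg (hh' x) (hwts x)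

end WeightedAverage

theorem stmt_18_general {Ω : Type*} [MeasurableSpace Ω] (μ : Measure Ω) [IsProbabilityMeasure μ]
    (X Z : Ω → ℝ) (g : ℝ → ℝ) (c : ℝ)
    (hXm : Measurable X)
    (MX : ℝ) (hXbdd : ∀ ω, |X ω| ≤ MX)
    (hZ : Integrable Z μ)
    (hg : ContDiff ℝ 1 g)
    (hwts : ∀ x : ℝ, Cov μ (fun ω => if X ω ≥ x then (1:ℝ) else 0) Z ≥ 0)
    (hg' : ∀ x : ℝ, deriv g x ≥ c)
    (hpos : Cov μ X Z > 0) :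
    Cov μ (fun ω => g (X ω)) Z / Cov μ X Z ≥ c := by
  have hXab : ∀ ω, X ω ∈ Icc (-MX) MX := fun ω => abs_le.mp (hXbdd ω)
  have hh : ContDiff ℝ 1 fun t => g t - c * t := hg.sub (contDiff_const.mul contDiff_id)
  have hh' (x : ℝ) : 0 ≤ deriv (fun t => g t - c * t) x := by
    have hd : HasDerivAt (fun t => g t - c * t) (deriv g x - c * 1) x :=
      ((hg.differentiable one_ne_zero) x).hasDerivAt.sub ((hasDerivAt_id x).const_mul c)
    rw [hd.deriv]
    linarith [hg' x]
  have hcov := cov_comp_nonneg hh hh' hXm hXab hZ hwts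
  have hcX : Continuous fun t : ℝ => c * t := continuous_const.mul continuous_id
  rw [cov_sub (hg.continuous.integrable_comp_of_mem_Icc hXm hXab)
    (hg.continuous.integrable_comp_mul_of_mem_Icc hXm hXab hZ)
    (hcX.integrable_comp_of_mem_Icc hXm hXab) (hcX.integrable_comp_mul_of_mem_Icc hXm hXab hZ),
    cov_const_mul] at hcov
  rw [ge_iff_le, le_div_iff₀ hpos]
  linarith

theorem stmt_18 {Ω : Type*} [MeasurableSpace Ω] (μ : Measure Ω) [IsProbabilityMeasure μ]
    (X Z : Ω → ℝ) (g : ℝ → ℝ) (c : ℝ)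
    (hXm : Measurable X) (hZm : Measurable Z)
    (MX : ℝ) (hXbdd : ∀ ω, |X ω| ≤ MX)
    (hZ : Integrable Z μ) (hXZ : Integrable (fun ω => X ω * Z ω) μ)
    (hg : ContDiff ℝ 1 g)
    (hcov : Cov μ X Z ≠ 0)
    (hwts : ∀ x : ℝ, Cov μ (fun ω => if X ω ≥ x then (1:ℝ) else 0) Z ≥ 0)
    (hg' : ∀ x : ℝ, deriv g x ≥ c)
    (hpos : Cov μ X Z > 0) :
    Cov μ (fun ω => g (X ω)) Z / Cov μ X Z ≥ c :=
  stmt_18_general μ X Z g c hXm MX hXbdd hZ hg hwts hg' hpos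
end
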